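/- Let T be a linear, trace-preserving, positive map on M_d(ℂ) with a unique stationary state, and suppose τ(T) < 1. Then τ(Z(T)) ≤ 1/(1 − τ(T)), where Z(T) = (id − (T − T^∞))^{-1}. -/

import Mathlib

open Matrix Filter
open scoped ComplexOrder

/-- Trace norm (Schatten 1-norm) of a complex matrix: `tr √(XᴴX)`. -/
noncomputable def traceNorm {d : ℕ} (X : Matrix (Fin d) (Fin d) ℂ) : ℝ :=
  (((Matrix.posSemidef_conjTranspose_mul_self X).1.eigenvectorUnitary : Matrix (Fin d) (Fin d) ℂ) *
    diagonal (((↑) : ℝ → ℂ) ∘ (√·) ∘ (Matrix.posSemidef_conjTranspose_mul_self X).1.eigenvalues) *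
    (star (Matrix.posSemidef_conjTranspose_mul_self X).1.eigenvectorUnitary :
      Matrix (Fin d) (Fin d) ℂ)).trace.re

/-- Linear endomorphisms of `M_d(ℂ)` (superoperators). -/
abbrev MatEnd (d : ℕ) := Module.End ℂ (Matrix (Fin d) (Fin d) ℂ)

/-- Trace-preserving map. -/
def IsTP {d : ℕ} (T : MatEnd d) : Prop := ∀ X, (T X).trace = X.trace

/-- Positive map: maps PSD matrices to PSD matrices. -/
def IsPos {d : ℕ} (T : MatEnd d) : Prop := ∀ X, X.PosSemidef → (T X).PosSemidef

/-- Hermiticity-preserving map. -/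
def IsHP {d : ℕ} (T : MatEnd d) : Prop := ∀ X, (T X)ᴴ = T Xᴴ

/-- Induced 1→1 norm: `sup_{X ≠ 0} ‖T X‖₁ / ‖X‖₁`. -/
noncomputable def norm1to1 {d : ℕ} (T : MatEnd d) : ℝ :=
  sSup {r | ∃ X, X ≠ 0 ∧ r = traceNorm (T X) / traceNorm X}

/-- Trace-norm contraction coefficient: sup over nonzero Hermitian traceless `σ`. -/
noncomputable def tau {d : ℕ} (T : MatEnd d) : ℝ :=
  sSup {r | ∃ σ : Matrix (Fin d) (Fin d) ℂ,
    σ.IsHermitian ∧ σ.trace = 0 ∧ σ ≠ 0 ∧ r = traceNorm (T σ) / traceNorm σ}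

/-- Density matrix: positive semidefinite with unit trace. -/
def IsDensity {d : ℕ} (ρ : Matrix (Fin d) (Fin d) ℂ) : Prop := ρ.PosSemidef ∧ ρ.trace = 1

/-- `Tinf` is the Cesàro-mean fixed point projection of `T`. -/
def IsCesaroProj {d : ℕ} (T Tinf : MatEnd d) : Prop :=
  ∀ X, Tendsto (fun n : ℕ => (n : ℂ)⁻¹ • ∑ k ∈ Finset.range n, (T ^ (k + 1)) X)
    atTop (nhds (Tinf X))

/-!
For Hermitian traceless `σ`, the matrix `w = Z σ` is again Hermitian and traceless. The Cesàro
projection maps every positive matrix `R` to `tr R • ρ`, with `ρ` the unique stationary state, so it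
kills `w`, and the defining identity of `Z` becomes `w = σ + T w`. The triangle inequality gives
`‖w‖₁ ≤ ‖σ‖₁ + τ(T) ‖w‖₁`.

The trace-norm estimates (triangle inequality, contractivity of positive trace-preserving maps) all
follow from `‖P - Q‖₁ ≤ tr P + tr Q` for positive `P, Q`, proved by pairing `P - Q` with its sign
`S = sign (P - Q)`, for which `-1 ≤ S ≤ 1` and `S (P - Q) = |P - Q|`.
-/

open scoped MatrixOrder ComplexStarModule

namespace Matrix

variable {d : ℕ} {A B P Q : Matrix (Fin d) (Fin d) ℂ}

lemma traceNorm_eq_re_trace_cfc_sqrt (X : Matrix (Fin d) (Fin d) ℂ) :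
    traceNorm X = (cfc Real.sqrt (Xᴴ * X)).trace.re := by
  rw [IsHermitian.cfc_eq (isHermitian_conjTranspose_mul_self X), IsHermitian.cfc,
    Unitary.conjStarAlgAut_apply]
  rfl

lemma IsHermitian.trace_cfc (hA : A.IsHermitian) (f : ℝ → ℝ) :
    (cfc f A).trace = ∑ i, (f (hA.eigenvalues i) : ℂ) := by
  rw [hA.cfc_eq, IsHermitian.cfc, Unitary.conjStarAlgAut_apply, trace_mul_cycle,
    Unitary.coe_star_mul_self, one_mul, trace_diagonal]
  rfl

lemma IsHermitian.traceNorm_eq (hA : A.IsHermitian) :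
    traceNorm A = ∑ i, |hA.eigenvalues i| := by
  have hsq : Aᴴ * A = cfc (fun x : ℝ => x ^ 2) A := by
    rw [hA.eq, cfc_pow_id A 2 hA.isSelfAdjoint, sq]
  rw [traceNorm_eq_re_trace_cfc_sqrt, hsq, ← cfc_comp' Real.sqrt (fun x : ℝ => x ^ 2) A,
    hA.trace_cfc]
  simp [Real.sqrt_sq_eq_abs]

lemma PosSemidef.traceNorm_eq (hA : A.PosSemidef) : traceNorm A = A.trace.re := by
  rw [hA.isHermitian.traceNorm_eq, hA.isHermitian.trace_eq_sum_eigenvalues, Complex.re_sum]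
  simp [abs_of_nonneg (hA.eigenvalues_nonneg _)]

lemma traceNorm_zero : traceNorm (0 : Matrix (Fin d) (Fin d) ℂ) = 0 := by
  simp [PosSemidef.zero.traceNorm_eq]

lemma IsHermitian.traceNorm_pos (hA : A.IsHermitian) (h : A ≠ 0) : 0 < traceNorm A := by
  rw [hA.traceNorm_eq]
  refine Finset.sum_pos' (fun i _ => abs_nonneg _) ?_
  by_contra! hle
  exact h (hA.eigenvalues_eq_zero_iff.mp (funext fun i => abs_nonpos_iff.mp (hle i (by simp))))

lemma PosSemidef.trace_mul_nonneg (hA : A.PosSemidef) (hB : B.PosSemidef) :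
    0 ≤ (A * B).trace := by
  have hS : (CFC.sqrt A).IsHermitian := (CFC.sqrt_nonneg A).posSemidef.isHermitian
  have h := (hB.mul_mul_conjTranspose_same (CFC.sqrt A)).trace_nonneg
  rwa [hS.eq, trace_mul_cycle, CFC.sqrt_mul_sqrt_self A hA.nonneg] at h

lemma IsHermitian.exists_posSemidef_sub (hA : A.IsHermitian) :
    ∃ P Q : Matrix (Fin d) (Fin d) ℂ, P.PosSemidef ∧ Q.PosSemidef ∧ A = P - Q ∧
      traceNorm A = P.trace.re + Q.trace.re := by
  refine ⟨cfc (fun x : ℝ => max x 0) A, cfc (fun x : ℝ => max (-x) 0) A,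
    (cfc_nonneg fun x _ => le_max_right x 0).posSemidef,
    (cfc_nonneg fun x _ => le_max_right (-x) 0).posSemidef, ?_, ?_⟩
  · rw [← cfc_sub .., funext max_zero_sub_max_neg_zero_eq_self, cfc_id' ℝ A]
  · simp only [hA.traceNorm_eq, hA.trace_cfc, Complex.re_sum, Complex.ofReal_re,
      ← Finset.sum_add_distrib, max_zero_add_max_neg_zero_eq_abs_self]

lemma IsHermitian.continuousOn_spectrum (hA : A.IsHermitian) (f : ℝ → ℝ) :
    ContinuousOn f (spectrum ℝ A) := by
  rw [hA.spectrum_real_eq_range_eigenvalues]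
  exact (Set.finite_range _).continuousOn f

lemma traceNorm_sub_le_trace_add_trace (hP : P.PosSemidef) (hQ : Q.PosSemidef) :
    traceNorm (P - Q) ≤ P.trace.re + Q.trace.re := by
  have hC : (P - Q).IsHermitian := hP.isHermitian.sub hQ.isHermitian
  set S := cfc (fun x : ℝ => (SignType.sign x : ℝ)) (P - Q)
  have hSC : S * (P - Q) = cfc (fun x : ℝ => |x|) (P - Q) := by
    conv_lhs => enter [2]; rw [← cfc_id' ℝ (P - Q)]
    rw [← cfc_mul _ _ _ (hC.continuousOn_spectrum _) (hC.continuousOn_spectrum _)]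
    simp only [sign_mul_self]
  have hnorm : traceNorm (P - Q) = (S * (P - Q)).trace.re := by
    rw [hSC, hC.trace_cfc, hC.traceNorm_eq, Complex.re_sum]
    simp
  have hS_le : S ≤ 1 := cfc_le_one _ _ fun x _ => by
    rcases lt_trichotomy x 0 with h | h | h <;> simp [h]
  have hS_ge : algebraMap ℝ _ (-1) ≤ S :=
    algebraMap_le_cfc _ _ _ (fun x _ => by rcases lt_trichotomy x 0 with h | h | h <;> simp [h])
      (hC.continuousOn_spectrum _)
  rw [map_neg, map_one, neg_le_iff_add_nonneg'] at hS_ge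
  have hP' := (sub_nonneg.mpr hS_le).posSemidef.trace_mul_nonneg hP
  have hQ' := hS_ge.posSemidef.trace_mul_nonneg hQ
  rw [sub_mul, trace_sub, one_mul] at hP'
  rw [add_mul, trace_add, one_mul] at hQ'
  rw [hnorm, mul_sub, trace_sub, Complex.sub_re]
  have := (Complex.nonneg_iff.mp hP').1
  have := (Complex.nonneg_iff.mp hQ').1
  simp only [Complex.sub_re, Complex.add_re] at *
  linarith

lemma IsHermitian.traceNorm_add_le (hA : A.IsHermitian) (hB : B.IsHermitian) :
    traceNorm (A + B) ≤ traceNorm A + traceNorm B := by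
  obtain ⟨PA, QA, hPA, hQA, rfl, hA⟩ := hA.exists_posSemidef_sub
  obtain ⟨PB, QB, hPB, hQB, rfl, hB⟩ := hB.exists_posSemidef_sub
  have := traceNorm_sub_le_trace_add_trace (hPA.add hPB) (hQA.add hQB)
  rw [trace_add, trace_add, Complex.add_re, Complex.add_re] at this
  rw [hA, hB, show PA - QA + (PB - QB) = PA + PB - (QA + QB) by abel]
  linarith

lemma isClosed_setOf_posSemidef {n : Type*} [Fintype n] :
    IsClosed {A : Matrix n n ℂ | A.PosSemidef} := by
  simp only [posSemidef_iff_dotProduct_mulVec, Set.ofPred_and, Set.ofPred_forall]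
  exact (isClosed_eq (by fun_prop) continuous_id).inter
    (isClosed_iInter fun x => isClosed_le continuous_const (by fun_prop))

end Matrix

section Superoperators

variable {d : ℕ} {S T Z : MatEnd d}

lemma IsPos.isHermitian_map (hT : IsPos T) {A : Matrix (Fin d) (Fin d) ℂ} (hA : A.IsHermitian) :
    (T A).IsHermitian := by
  obtain ⟨P, Q, hP, hQ, rfl, -⟩ := hA.exists_posSemidef_sub
  rw [map_sub]
  exact (hT P hP).isHermitian.sub (hT Q hQ).isHermitian

lemma IsPos.isHP (hT : IsPos T) : IsHP T := by
  intro X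
  rw [← realPart_add_I_smul_imaginaryPart X]
  have hH : (ℜ X : Matrix (Fin d) (Fin d) ℂ).IsHermitian := (ℜ X).2
  have hK : (ℑ X : Matrix (Fin d) (Fin d) ℂ).IsHermitian := (ℑ X).2
  simp only [map_add, map_smul, conjTranspose_add, conjTranspose_smul, hH.eq, hK.eq,
    (hT.isHermitian_map hH).eq, (hT.isHermitian_map hK).eq]

lemma IsPos.traceNorm_map_le (hPos : IsPos T) (hTP : IsTP T) {A : Matrix (Fin d) (Fin d) ℂ}
    (hA : A.IsHermitian) : traceNorm (T A) ≤ traceNorm A := by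
  obtain ⟨P, Q, hP, hQ, rfl, hA⟩ := hA.exists_posSemidef_sub
  rw [hA, map_sub, ← hTP P, ← hTP Q]
  exact traceNorm_sub_le_trace_add_trace (hPos P hP) (hPos Q hQ)

lemma IsPos.pow (hT : IsPos T) (k : ℕ) : IsPos (T ^ k) := by
  induction k with
  | zero => exact fun X hX => hX
  | succ k ih => exact fun X hX => by rw [pow_succ', Module.End.mul_apply]; exact hT _ (ih X hX)

lemma IsTP.pow (hT : IsTP T) (k : ℕ) : IsTP (T ^ k) := by
  induction k with
  | zero => exact fun X => rfl
  | succ k ih => exact fun X => by rw [pow_succ', Module.End.mul_apply, hT, ih]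

lemma isHP_one : IsHP (1 : MatEnd d) := fun _ => rfl

lemma IsHP.sub (hS : IsHP S) (hT : IsHP T) : IsHP (S - T) := fun X => by
  simp only [LinearMap.sub_apply, conjTranspose_sub, hS X, hT X]

lemma IsHP.of_inverse (hT : IsHP T) (h₁ : Z * T = 1) (h₂ : T * Z = 1) : IsHP Z := fun X => by
  have h₁X := LinearMap.congr_fun h₁ (Z X)ᴴ
  have h₂X := LinearMap.congr_fun h₂ X
  simp only [Module.End.mul_apply, Module.End.one_apply] at h₁X h₂X
  rw [← h₁X, ← hT, h₂X]

lemma traceNorm_map_le_tau_mul (hTP : IsTP T) (hPos : IsPos T) {w : Matrix (Fin d) (Fin d) ℂ}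
    (hw : w.IsHermitian) (htr : w.trace = 0) : traceNorm (T w) ≤ tau T * traceNorm w := by
  rcases eq_or_ne w 0 with rfl | hne
  · simp [traceNorm_zero]
  have hpos := hw.traceNorm_pos hne
  have hbdd : BddAbove {r | ∃ σ : Matrix (Fin d) (Fin d) ℂ,
      σ.IsHermitian ∧ σ.trace = 0 ∧ σ ≠ 0 ∧ r = traceNorm (T σ) / traceNorm σ} := by
    refine ⟨1, ?_⟩
    rintro _ ⟨σ, hσ, -, hσ0, rfl⟩
    exact div_le_one_of_le₀ (hPos.traceNorm_map_le hTP hσ) (hσ.traceNorm_pos hσ0).le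
  rw [← div_le_iff₀ hpos]
  exact le_csSup hbdd ⟨w, hw, htr, hne, rfl⟩

lemma tau_le {c : ℝ} (hc : 0 ≤ c) (h : ∀ σ : Matrix (Fin d) (Fin d) ℂ, σ.IsHermitian →
    σ.trace = 0 → traceNorm (S σ) ≤ c * traceNorm σ) : tau S ≤ c := by
  refine Real.sSup_le ?_ hc
  rintro _ ⟨σ, hσ, htr, hσ0, rfl⟩
  exact div_le_of_le_mul₀ (hσ.traceNorm_pos hσ0).le hc (h σ hσ htr)

end Superoperators

section Cesaro

variable {d : ℕ} {T Tinf : MatEnd d}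

noncomputable def cesaroMean (T : MatEnd d) (n : ℕ) (X : Matrix (Fin d) (Fin d) ℂ) :
    Matrix (Fin d) (Fin d) ℂ :=
  (n : ℂ)⁻¹ • ∑ k ∈ Finset.range n, (T ^ (k + 1)) X

lemma IsTP.trace_cesaroMean (hT : IsTP T) {n : ℕ} (hn : n ≠ 0) (X : Matrix (Fin d) (Fin d) ℂ) :
    (cesaroMean T n X).trace = X.trace := by
  simp only [cesaroMean, trace_smul, trace_sum, fun k : ℕ => hT.pow k X, Finset.sum_const,
    Finset.card_range, nsmul_eq_mul, smul_eq_mul]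
  field_simp

lemma IsPos.posSemidef_cesaroMean (hT : IsPos T) (n : ℕ) {X : Matrix (Fin d) (Fin d) ℂ}
    (hX : X.PosSemidef) : (cesaroMean T n X).PosSemidef :=
  (posSemidef_sum _ fun k _ => hT.pow (k + 1) X hX).smul (by simp)

lemma map_cesaroMean (T : MatEnd d) {n : ℕ} (hn : n ≠ 0) (X : Matrix (Fin d) (Fin d) ℂ) :
    T (cesaroMean T n X) = (1 + (n : ℂ)⁻¹) • cesaroMean T (n + 1) X - (n : ℂ)⁻¹ • T X := by
  have hsum : ∑ k ∈ Finset.range (n + 1), (T ^ (k + 1)) X =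
      T (∑ k ∈ Finset.range n, (T ^ (k + 1)) X) + T X := by
    rw [Finset.sum_range_succ', map_sum]
    simp [pow_succ' T (_ + 1), Module.End.mul_apply]
  have hscalar : (1 + (n : ℂ)⁻¹) * ((n + 1 : ℕ) : ℂ)⁻¹ = (n : ℂ)⁻¹ := by
    have : (n : ℂ) ≠ 0 := Nat.cast_ne_zero.mpr hn
    push_cast
    field_simp
  rw [cesaroMean, cesaroMean, map_smul, smul_smul, hscalar, hsum, smul_add, add_sub_cancel_right]

namespace IsCesaroProj

variable (hinf : IsCesaroProj T Tinf)
include hinf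

lemma tendsto_cesaroMean (X : Matrix (Fin d) (Fin d) ℂ) :
    Tendsto (fun n => cesaroMean T n X) atTop (nhds (Tinf X)) :=
  hinf X

lemma trace_apply (hTP : IsTP T) (X : Matrix (Fin d) (Fin d) ℂ) : (Tinf X).trace = X.trace :=
  tendsto_nhds_unique ((continuous_id.matrix_trace.tendsto _).comp (hinf.tendsto_cesaroMean X))
    (tendsto_const_nhds.congr' <| (eventually_ne_atTop 0).mono fun _ hn =>
      (hTP.trace_cesaroMean hn X).symm)

lemma isPos (hPos : IsPos T) : IsPos Tinf := fun _ hX =>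
  isClosed_setOf_posSemidef.mem_of_tendsto (hinf.tendsto_cesaroMean _)
    (Eventually.of_forall fun n => hPos.posSemidef_cesaroMean n hX)

lemma map_apply (X : Matrix (Fin d) (Fin d) ℂ) : T (Tinf X) = Tinf X := by
  have hT : Tendsto (fun n => T (cesaroMean T n X)) atTop (nhds (T (Tinf X))) :=
    ((LinearMap.continuous_of_finiteDimensional T).tendsto _).comp (hinf.tendsto_cesaroMean X)
  have hinv : Tendsto (fun n : ℕ => (n : ℂ)⁻¹) atTop (nhds 0) :=
    tendsto_inv_atTop_nhds_zero_nat
  have hlim : Tendsto (fun n : ℕ => (1 + (n : ℂ)⁻¹) • cesaroMean T (n + 1) X - (n : ℂ)⁻¹ • T X)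
      atTop (nhds (Tinf X)) := by
    simpa using (((tendsto_const_nhds (x := (1 : ℂ))).add hinv).smul
      ((hinf.tendsto_cesaroMean X).comp (tendsto_add_atTop_nat 1))).sub (hinv.smul_const (T X))
  exact tendsto_nhds_unique hT (hlim.congr' <| (eventually_ne_atTop 0).mono fun _ hn =>
    (map_cesaroMean T hn X).symm)

lemma apply_eq_trace_smul (hTP : IsTP T) (hPos : IsPos T) {ρ : Matrix (Fin d) (Fin d) ℂ}
    (hρ : ∀ σ, IsDensity σ ∧ T σ = σ → σ = ρ) {R : Matrix (Fin d) (Fin d) ℂ}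
    (hR : R.PosSemidef) : Tinf R = R.trace • ρ := by
  rcases eq_or_ne R.trace 0 with h0 | h0
  · rw [hR.trace_eq_zero_iff.mp h0, map_zero, trace_zero, zero_smul]
  have hdens : IsDensity (R.trace⁻¹ • Tinf R) := by
    refine ⟨(hinf.isPos hPos R hR).smul (inv_nonneg.mpr hR.trace_nonneg), ?_⟩
    rw [trace_smul, hinf.trace_apply hTP, smul_eq_mul, inv_mul_cancel₀ h0]
  have hfix : T (R.trace⁻¹ • Tinf R) = R.trace⁻¹ • Tinf R := by
    rw [map_smul, hinf.map_apply]
  rw [← hρ _ ⟨hdens, hfix⟩, smul_smul, mul_inv_cancel₀ h0, one_smul]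

lemma apply_eq_zero (hTP : IsTP T) (hPos : IsPos T)
    (huniq : ∃! ρ : Matrix (Fin d) (Fin d) ℂ, IsDensity ρ ∧ T ρ = ρ)
    {w : Matrix (Fin d) (Fin d) ℂ} (hw : w.IsHermitian) (htr : w.trace = 0) : Tinf w = 0 := by
  obtain ⟨ρ, -, hρ⟩ := huniq
  obtain ⟨P, Q, hP, hQ, rfl, -⟩ := hw.exists_posSemidef_sub
  rw [map_sub, hinf.apply_eq_trace_smul hTP hPos hρ hP, hinf.apply_eq_trace_smul hTP hPos hρ hQ,
    ← sub_smul, ← trace_sub, htr, zero_smul]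

end IsCesaroProj

end Cesaro

/-- `τ(Z(T)) ≤ 1/(1 − τ(T))` for a map with unique stationary state. -/
theorem tau_Z_le_inv_one_sub_tau {d : ℕ} (T Tinf Z : MatEnd d)
    (hTP : IsTP T) (hPos : IsPos T)
    (huniq : ∃! ρ : Matrix (Fin d) (Fin d) ℂ, IsDensity ρ ∧ T ρ = ρ)
    (hinf : IsCesaroProj T Tinf)
    (hZ₁ : Z * (1 - (T - Tinf)) = 1) (hZ₂ : (1 - (T - Tinf)) * Z = 1)
    (htau : tau T < 1) : tau Z ≤ 1 / (1 - tau T) := by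
  have hgap : 0 < 1 - tau T := sub_pos.mpr htau
  have hZ : IsHP Z := (isHP_one.sub (hPos.isHP.sub (hinf.isPos hPos).isHP)).of_inverse hZ₁ hZ₂
  refine tau_le (one_div_pos.mpr hgap).le fun σ hσ htr => ?_
  have hσ_eq : Z σ - (T (Z σ) - Tinf (Z σ)) = σ := by
    simpa [Module.End.mul_apply] using LinearMap.congr_fun hZ₂ σ
  have hw : (Z σ).IsHermitian := by rw [IsHermitian, hZ, hσ.eq]
  have hwtr : (Z σ).trace = 0 := by
    have := congrArg trace hσ_eq
    rwa [trace_sub, trace_sub, hTP, hinf.trace_apply hTP, sub_self, sub_zero, htr] at this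
  rw [hinf.apply_eq_zero hTP hPos huniq hw hwtr, sub_zero, sub_eq_iff_eq_add] at hσ_eq
  have hT := traceNorm_map_le_tau_mul hTP hPos hw hwtr
  have htri := hσ.traceNorm_add_le (hPos.isHermitian_map hw)
  rw [← hσ_eq] at htri
  rw [one_div_mul_eq_div, le_div_iff₀ hgap]
  linarith
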